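/- The maximal length of a two-orthogonal decomposition in ℝ^{n_1} ⊗ ⋯ ⊗ ℝ^{n_d} is N = min_{1 ≤ k ≤ d} ∏_{j ≠ k} n_j. That is: (a) every two-orthogonal decomposition T = Σ_{i=1}^r x^{(i)} with all summands nonzero has r ≤ N; and (b) there exists a tensor in ℝ^{n_1} ⊗ ⋯ ⊗ ℝ^{n_d} admitting a two-orthogonal decomposition with exactly N nonzero summands. -/

import Mathlib

/-!
Dropping a mode `K` from the summands of a two-orthogonal decomposition keeps them pairwise
orthogonal, because every pair is orthogonal in some mode other than `K`; so they become
linearly independent vectors of `⊗_{j ≠ K} ℝ^{n_j}`, and there are at most `∏_{j ≠ K} n_j` of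
them. Conversely, let `K` be a mode of largest dimension and index standard basis tensors by the
words of the parity-check code: the coordinates `j ≠ K` are free and coordinate `K` is their sum
modulo `n_K`. Two distinct words differing in a single free coordinate `j` differ by less than
`n_j ≤ n_K` there, hence also in coordinate `K`; so distinct words differ in two coordinates and
the corresponding basis tensors are orthogonal in two modes.
-/

/-- Frobenius/Euclidean inner product of real arrays indexed by a finite type. -/
def fdot {ι : Type*} [Fintype ι] (u v : ι → ℝ) : ℝ := ∑ a, u a * v a

/-- The rank-one tensor `v₁ ⊗ ⋯ ⊗ v_d`, as an array. -/
def tensProd {d : ℕ} {n : Fin d → ℕ} (v : (k : Fin d) → Fin (n k) → ℝ) :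
    ((k : Fin d) → Fin (n k)) → ℝ :=
  fun i => ∏ k, v k (i k)

open Finset

def IsTwoOrthogonal {ι : Type*} {d : ℕ} {n : Fin d → ℕ}
    (x : ι → (k : Fin d) → Fin (n k) → ℝ) : Prop :=
  Pairwise fun i j => ∃ k₁ k₂ : Fin d, k₁ ≠ k₂ ∧
    fdot (x i k₁) (x j k₁) = 0 ∧ fdot (x i k₂) (x j k₂) = 0

section fdot

variable {ι : Type*} [Fintype ι]

theorem fdot_eq_dotProduct (u v : ι → ℝ) : fdot u v = u ⬝ᵥ v := rfl

theorem fdot_self_eq_zero {v : ι → ℝ} : fdot v v = 0 ↔ v = 0 :=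
  dotProduct_self_eq_zero

theorem fdot_single_single_of_ne [DecidableEq ι] {t t' : ι} (h : t ≠ t') :
    fdot (Pi.single t 1) (Pi.single t' 1) = 0 := by
  rw [fdot_eq_dotProduct, single_dotProduct, Pi.single_eq_of_ne h, mul_zero]

theorem fdot_prod_eq_prod_fdot {J : Type*} [Fintype J] [DecidableEq J] {α : J → Type*}
    [∀ j, Fintype (α j)] (u v : (j : J) → α j → ℝ) :
    fdot (fun a : (j : J) → α j => ∏ j, u j (a j)) (fun a => ∏ j, v j (a j)) =
      ∏ j, fdot (u j) (v j) := by
  simp only [fdot, prod_univ_sum, Fintype.piFinset_univ, prod_mul_distrib]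

theorem linearIndependent_of_pairwise_fdot_eq_zero {κ : Type*} {v : κ → ι → ℝ}
    (horth : Pairwise fun i j => fdot (v i) (v j) = 0) (hv : ∀ i, v i ≠ 0) :
    LinearIndependent ℝ v :=
  LinearMap.BilinForm.linearIndependent_of_iIsOrtho (B := dotProductBilin ℝ ℝ) horth
    fun i => fdot_self_eq_zero.not.mpr (hv i)

end fdot

theorem tensProd_eq_zero_iff {d : ℕ} {n : Fin d → ℕ} {v : (k : Fin d) → Fin (n k) → ℝ} :
    tensProd v = 0 ↔ ∃ k, v k = 0 := by
  constructor
  · intro h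
    by_contra! hv
    choose a ha using fun k => Function.ne_iff.mp (hv k)
    exact prod_ne_zero_iff.mpr (fun k _ => ha k) (congrFun h a)
  · rintro ⟨k, hk⟩
    funext a
    exact prod_eq_zero (mem_univ k) (by simp [hk])

theorem card_pi_subtype_ne {α : Type*} [Fintype α] [DecidableEq α] (n : α → ℕ) (K : α) :
    Fintype.card ((j : {j // j ≠ K}) → Fin (n j)) = ∏ j ∈ univ.erase K, n j := by
  simp only [Fintype.card_pi, Fintype.card_fin]
  exact (prod_subtype _ (fun j => by simp) n).symm

theorem card_le_prod_erase_of_isTwoOrthogonal {ι : Type*} [Fintype ι] {d : ℕ} {n : Fin d → ℕ}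
    {x : ι → (k : Fin d) → Fin (n k) → ℝ} (hx : ∀ i, tensProd (x i) ≠ 0)
    (horth : IsTwoOrthogonal x) (K : Fin d) :
    Fintype.card ι ≤ ∏ j ∈ univ.erase K, n j := by
  let y : ι → ((j : {j // j ≠ K}) → Fin (n j)) → ℝ := fun i a => ∏ j : {j // j ≠ K}, x i j (a j)
  have hy_fdot : ∀ i i', fdot (y i) (y i') = ∏ j : {j // j ≠ K}, fdot (x i j) (x i' j) :=
    fun i i' => fdot_prod_eq_prod_fdot _ _
  have hy : Pairwise fun i i' => fdot (y i) (y i') = 0 := by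
    intro i i' hii'
    obtain ⟨k₁, k₂, hk, h₁, h₂⟩ := horth hii'
    obtain ⟨k, hkK, hk0⟩ : ∃ k ≠ K, fdot (x i k) (x i' k) = 0 := by
      by_cases h : k₁ = K
      · exact ⟨k₂, h ▸ hk.symm, h₂⟩
      · exact ⟨k₁, h, h₁⟩
    rw [hy_fdot]
    exact prod_eq_zero (mem_univ ⟨k, hkK⟩) hk0
  have hy0 : ∀ i, y i ≠ 0 := by
    intro i
    rw [ne_eq, ← fdot_self_eq_zero, hy_fdot, prod_eq_zero_iff]
    rintro ⟨j, -, hj⟩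
    exact hx i (tensProd_eq_zero_iff.mpr ⟨j, fdot_self_eq_zero.mp hj⟩)
  have := (linearIndependent_of_pairwise_fdot_eq_zero hy hy0).fintype_card_le_finrank
  rwa [Module.finrank_fintype_fun_eq_card, card_pi_subtype_ne] at this

theorem inf'_prod_erase_eq_of_forall_le {α : Type*} [Fintype α] [DecidableEq α] (n : α → ℕ)
    (H : (univ : Finset α).Nonempty) {K : α} (hK : ∀ k, n k ≤ n K) :
    univ.inf' H (fun k => ∏ j ∈ univ.erase k, n j) = ∏ j ∈ univ.erase K, n j := by
  refine le_antisymm (inf'_le _ (mem_univ K)) (le_inf' _ _ fun k _ => ?_)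
  rcases eq_or_ne k K with rfl | hkK
  · rfl
  rw [← mul_prod_erase _ _ (mem_erase.mpr ⟨hkK, mem_univ k⟩),
    ← mul_prod_erase _ _ (mem_erase.mpr ⟨hkK.symm, mem_univ K⟩), erase_right_comm]
  exact Nat.mul_le_mul_right _ (hK k)

section checkCode

variable {α : Type*} [Fintype α] [DecidableEq α] {n : α → ℕ} (K : α) [NeZero (n K)]

def checkCode (a : (j : {j // j ≠ K}) → Fin (n j)) (k : α) : Fin (n k) :=
  if h : k = K then h ▸ Fin.ofNat (n K) (∑ j, (a j : ℕ)) else a ⟨k, h⟩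

theorem checkCode_of_ne (a : (j : {j // j ≠ K}) → Fin (n j)) {k : α} (h : k ≠ K) :
    checkCode K a k = a ⟨k, h⟩ :=
  dif_neg h

theorem checkCode_self_val (a : (j : {j // j ≠ K}) → Fin (n j)) :
    (checkCode K a K : ℕ) = (∑ j, (a j : ℕ)) % n K := by
  simp [checkCode]

variable {K}

theorem checkCode_self_ne (hK : ∀ j, n j ≤ n K) {a b : (j : {j // j ≠ K}) → Fin (n j)}
    {j₀ : {j // j ≠ K}} (h₀ : a j₀ ≠ b j₀) (heq : ∀ j, j ≠ j₀ → a j = b j) :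
    checkCode K a K ≠ checkCode K b K := by
  intro h
  have hmod := congrArg Fin.val h
  rw [checkCode_self_val, checkCode_self_val,
    ← add_sum_erase _ (fun j => (a j : ℕ)) (mem_univ j₀),
    ← add_sum_erase _ (fun j => (b j : ℕ)) (mem_univ j₀),
    sum_congr rfl fun j hj => congrArg Fin.val (heq j (ne_of_mem_erase hj))] at hmod
  exact h₀ (Fin.ext ((Nat.ModEq.add_right_cancel' _ hmod).eq_of_lt_of_lt
    ((a j₀).isLt.trans_le (hK _)) ((b j₀).isLt.trans_le (hK _))))

theorem two_le_hammingDist_checkCode (hK : ∀ j, n j ≤ n K)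
    {a b : (j : {j // j ≠ K}) → Fin (n j)} (hab : a ≠ b) :
    2 ≤ hammingDist (checkCode K a) (checkCode K b) := by
  obtain ⟨j₀, h₀⟩ := Function.ne_iff.mp hab
  have hj₀ : checkCode K a j₀ ≠ checkCode K b j₀ := by
    rwa [checkCode_of_ne K a j₀.2, checkCode_of_ne K b j₀.2]
  refine one_lt_card.mpr ?_
  simp only [mem_filter, mem_univ, true_and]
  by_cases hrest : ∃ j₁, j₁ ≠ j₀ ∧ a j₁ ≠ b j₁
  · obtain ⟨j₁, hne, h₁⟩ := hrest
    refine ⟨j₀, hj₀, j₁, ?_, fun h => hne (Subtype.ext h).symm⟩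
    rwa [checkCode_of_ne K a j₁.2, checkCode_of_ne K b j₁.2]
  · push Not at hrest
    exact ⟨j₀, hj₀, K, checkCode_self_ne hK h₀ hrest, j₀.2⟩

end checkCode

theorem isTwoOrthogonal_single {ι : Type*} {d : ℕ} {n : Fin d → ℕ}
    {c : ι → (k : Fin d) → Fin (n k)} (hc : Pairwise fun i j => 2 ≤ hammingDist (c i) (c j)) :
    IsTwoOrthogonal fun i k => (Pi.single (c i k) 1 : Fin (n k) → ℝ) := by
  intro i j hij
  obtain ⟨k₁, h₁, k₂, h₂, hk⟩ := one_lt_card.mp (hc hij)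
  simp only [mem_filter, mem_univ, true_and] at h₁ h₂
  exact ⟨k₁, k₂, hk, fdot_single_single_of_ne h₁, fdot_single_single_of_ne h₂⟩

/-- The maximal length of a two-orthogonal decomposition in
`ℝ^{n₁} ⊗ ⋯ ⊗ ℝ^{n_d}` is `N = min_k ∏_{j ≠ k} n_j`:
(a) every two-orthogonal decomposition with nonzero summands has at most `N` summands, and
(b) there is a two-orthogonal decomposition with exactly `N` nonzero summands. -/
theorem stmt1 (d : ℕ) (hd : 2 ≤ d) (n : Fin d → ℕ) (hn : ∀ k, 2 ≤ n k)
    (N : ℕ)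
    (hN : N = Finset.univ.inf' ⟨(⟨0, by omega⟩ : Fin d), Finset.mem_univ _⟩
        (fun k : Fin d => ∏ j ∈ Finset.univ.erase k, n j)) :
    ((∀ (r : ℕ) (x : Fin r → (k : Fin d) → Fin (n k) → ℝ),
      (∀ i, tensProd (x i) ≠ 0) →
      (∀ i j : Fin r, i ≠ j → ∃ k₁ k₂ : Fin d, k₁ ≠ k₂ ∧
        fdot (x i k₁) (x j k₁) = 0 ∧ fdot (x i k₂) (x j k₂) = 0) →
      r ≤ N)
    ∧
    (∃ x : Fin N → (k : Fin d) → Fin (n k) → ℝ,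
      (∀ i, tensProd (x i) ≠ 0) ∧
      (∀ i j : Fin N, i ≠ j → ∃ k₁ k₂ : Fin d, k₁ ≠ k₂ ∧
        fdot (x i k₁) (x j k₁) = 0 ∧ fdot (x i k₂) (x j k₂) = 0))) := by
  obtain ⟨K, -, hK⟩ := univ.exists_max_image n ⟨⟨0, by omega⟩, mem_univ _⟩
  replace hK : ∀ k, n k ≤ n K := fun k => hK k (mem_univ k)
  obtain rfl : N = ∏ j ∈ univ.erase K, n j := hN.trans (inf'_prod_erase_eq_of_forall_le n _ hK)
  refine ⟨fun r x hx horth => ?_, ?_⟩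
  · simpa only [Fintype.card_fin] using card_le_prod_erase_of_isTwoOrthogonal hx horth K
  · have : NeZero (n K) := ⟨(zero_lt_two.trans_le (hn K)).ne'⟩
    let e := (Fintype.equivFinOfCardEq (card_pi_subtype_ne n K)).symm
    refine ⟨fun i k => Pi.single (checkCode K (e i) k) 1, fun i => ?_,
      isTwoOrthogonal_single fun i j hij => two_le_hammingDist_checkCode hK (e.injective.ne hij)⟩
    simp [tensProd_eq_zero_iff]
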